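/- Let c = (c₂,…,c_{m+1}) be a children sequence with Σ_j c_j = m − 1, let π be a uniform random permutation, set S(j) = Σ_{i=1}^j (c_{π(i)} − 1), let i₀ be the location of the first minimum of S, and let the excursion walk be S^exc(j) = Σ_{i=1}^j (c_{π(i₀+i)} − 1) (indices mod m). Then the labeled plane tree T^lab whose Łukasiewicz walk is S^exc is uniformly distributed over the set of plane trees on m labeled vertices in which vertex j has exactly c_j children; its probability of equaling any fixed such tree is 1/(m−1)!. -/

import Mathlib

open scoped BigOperators Classical
open Filter MeasureTheory

namespace Paper

inductive PlaneTree : Type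
  | node : List PlaneTree → PlaneTree

namespace PlaneTree

def deg : PlaneTree → ℕ
  | node ts => ts.length

mutual
  def pos : PlaneTree → List (List ℕ)
    | node ts => [] :: posF 0 ts
  def posF : ℕ → List PlaneTree → List (List ℕ)
    | _, [] => []
    | i, t :: ts => (pos t).map (fun q => i :: q) ++ posF (i + 1) ts
end

mutual
  def dfsDeg : PlaneTree → List ℕ
    | node ts => ts.length :: dfsDegF ts
  def dfsDegF : List PlaneTree → List ℕ
    | [] => []
    | t :: ts => dfsDeg t ++ dfsDegF ts
end

def subtreeAt : PlaneTree → List ℕ → Option PlaneTree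
  | t, [] => some t
  | node ts, i :: p =>
    match ts[i]? with
    | some t' => subtreeAt t' p
    | none => none

def numChild (t : PlaneTree) (p : List ℕ) : ℕ := ((subtreeAt t p).map deg).getD 0

def IsVertex (t : PlaneTree) (p : List ℕ) : Prop := (subtreeAt t p).isSome

def IsLeaf (t : PlaneTree) (p : List ℕ) : Prop := (subtreeAt t p).isSome ∧ numChild t p = 0

/-- number of vertices of `t` having exactly `i` children (empirical children distribution) -/
def ecd (t : PlaneTree) (i : ℕ) : ℕ :=
  ((pos t).filter fun p => decide (numChild t p = i)).length

/-- ECD of a plane forest with ranked roots -/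
def ecdF (f : List PlaneTree) (i : ℕ) : ℕ := (f.map fun t => ecd t i).sum

/-- number of children of the `j`-th root of a forest -/
def rootDeg (f : List PlaneTree) (j : ℕ) : ℕ := deg (f.getD j (node []))

/-- the set of plane forests with ranked roots with ECD `s` -/
def forestSet (s : ℕ → ℕ) : Set (List PlaneTree) := {f | ∀ i, ecdF f i = s i}

/-- the set of plane trees with ECD `s` -/
def treeSet (s : ℕ → ℕ) : Set PlaneTree := {t | ∀ i, ecd t i = s i}

/-- strict depth-first (preorder) order on positions -/
def dfLT (p q : List ℕ) : Prop := List.Lex (· < ·) p q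

def parent (p : List ℕ) : List ℕ := p.dropLast

/-- `q` is a strict ancestor of `p`, i.e. `q ∈ [ρ, p)` -/
def StrictAnc (q p : List ℕ) : Prop := q <+: p ∧ q ≠ p

/-- admissible (ordered) pair of leaves -/
def Admissible (t : PlaneTree) (u v : List ℕ) : Prop :=
  IsLeaf t u ∧ IsLeaf t v ∧ 2 ≤ v.length ∧
    StrictAnc (parent (parent v)) (parent u) ∧ dfLT (parent u) (parent v)

def ASet (t : PlaneTree) : Set (List ℕ × List ℕ) := {uv | Admissible t uv.1 uv.2}

def fA (t : PlaneTree) (u : List ℕ) : Set (List ℕ) := {v | Admissible t u v}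

def B2 (t : PlaneTree) (u : List ℕ) : Set (List ℕ) :=
  {v | IsVertex t v ∧ 2 ≤ v.length ∧ StrictAnc (parent (parent v)) u}

noncomputable def leafFinset (t : PlaneTree) : Finset (List ℕ) :=
  ((pos t).toFinset).filter fun p => IsLeaf t p

def leafOf {k : ℕ} (w : Fin k → List ℕ × List ℕ) (y : Fin k × Bool) : List ℕ :=
  if y.2 then (w y.1).1 else (w y.1).2

/-- ordered `k`-tuples of admissible pairs using `2k` distinct leaves -/
def AkOrd (t : PlaneTree) (k : ℕ) : Set (Fin k → List ℕ × List ℕ) :=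
  {w | (∀ a, Admissible t (w a).1 (w a).2) ∧ Function.Injective (leafOf w)}

/-- unordered collections of `k` admissible pairs using `2k` distinct leaves -/
def Ak (t : PlaneTree) (k : ℕ) : Set (Finset (List ℕ × List ℕ)) :=
  {x | x.card = k ∧ (∀ uv ∈ x, Admissible t uv.1 uv.2) ∧
    Set.InjOn (fun y : (List ℕ × List ℕ) × Bool => if y.2 then y.1.1 else y.1.2)
      {y | y.1 ∈ x}}

/-- the set `T_s^(k)` of pairs of a plane tree with ECD `s` and a set of `k` admissible pairs -/
def Tsk (s : ℕ → ℕ) (k : ℕ) : Set (PlaneTree × Finset (List ℕ × List ℕ)) :=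
  {tx | (∀ i, ecd tx.1 i = s i) ∧ tx.2 ∈ Ak tx.1 k}

end PlaneTree

/-- labeled plane trees -/
inductive LTree : Type
  | node : ℕ → List LTree → LTree

namespace LTree

mutual
  def shape : LTree → PlaneTree
    | node _ ts => .node (shapeF ts)
  def shapeF : List LTree → List PlaneTree
    | [] => []
    | t :: ts => shape t :: shapeF ts
end

mutual
  def dfsLab : LTree → List ℕ
    | node a ts => a :: dfsLabF ts
  def dfsLabF : List LTree → List ℕ
    | [] => []
    | t :: ts => dfsLab t ++ dfsLabF ts
end

mutual
  def dfsDeg : LTree → List ℕ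
    | node _ ts => ts.length :: dfsDegF ts
  def dfsDegF : List LTree → List ℕ
    | [] => []
    | t :: ts => dfsDeg t ++ dfsDegF ts
end

def subtreeAt : LTree → List ℕ → Option LTree
  | t, [] => some t
  | node _ ts, i :: p =>
    match ts[i]? with
    | some t' => subtreeAt t' p
    | none => none

def labelAt (t : LTree) (p : List ℕ) : ℕ :=
  ((subtreeAt t p).map fun u => match u with | node a _ => a).getD 0

end LTree

/-- partial-sum steps of the permuted walk -/
def steps {m : ℕ} (c : Fin m → ℕ) (π : Equiv.Perm (Fin m)) : List ℤ :=
  List.ofFn fun i => (c (π i) : ℤ) - 1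

/-- first index `j ∈ [1, length]` at which the partial sums attain their minimum -/
noncomputable def firstMinIdx (l : List ℤ) : ℕ :=
  (((Finset.Icc 1 l.length).filter fun j =>
      ∀ j' ∈ Finset.Icc 1 l.length, (l.take j).sum ≤ (l.take j').sum).min).untopD 0

/-- the DFS vertex sequence obtained by rotating the uniformly permuted vertex
sequence at the first minimum of its Łukasiewicz-type walk (Vervaat transform) -/
noncomputable def rotSeq {m : ℕ} (c : Fin m → ℕ) (π : Equiv.Perm (Fin m)) : List (Fin m) :=
  (List.ofFn fun i => π i).rotate (firstMinIdx (steps c π))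

/-- the degree of a vertex in a (simple) edge set -/
def degIn (E : Finset (Sym2 ℕ)) (v : ℕ) : ℕ := (E.filter fun e => v ∈ e).card

/-- degree of a vertex in a multigraph given by an edge multiset (loops count twice) -/
def mdeg (E : Multiset (Sym2 ℕ)) (v : ℕ) : ℕ :=
  (E.map fun e => (if v ∈ e then 1 else 0) + (if e = s(v, v) then 1 else 0)).sum

/-- connectivity of a (multi)graph on vertex set `V` with edges `E` -/
def ConnOn (V : Finset ℕ) (E : Set (Sym2 ℕ)) : Prop :=
  ∀ a ∈ V, ∀ b ∈ V, Relation.ReflTransGen (fun a b => s(a, b) ∈ E) a b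

/-- the set of simple connected labeled graphs on `{1, …, m}` with degree sequence `d` -/
def GconSet (m : ℕ) (d : ℕ → ℕ) : Set (Finset (Sym2 ℕ)) :=
  {E | (∀ e ∈ E, ¬ e.IsDiag) ∧ (∀ e ∈ E, ∀ v ∈ e, v ∈ Finset.Icc 1 m) ∧
       (∀ v ∈ Finset.Icc 1 m, degIn E v = d v) ∧ ConnOn (Finset.Icc 1 m) (E : Set (Sym2 ℕ))}

/-- ECD of the children sequence `(d̃₂ − 1, …, d̃_{m̃} − 1, 0, …, 0)` (with `2k` zeros) -/
def ecdFromDeg (m k : ℕ) (d : ℕ → ℕ) (i : ℕ) : ℕ :=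
  ((Finset.Icc 2 m).filter fun j => d j = i + 1).card + if i = 0 then 2 * k else 0

/-- `≪` order on admissible pairs -/
def pairLT (a b : List ℕ × List ℕ) : Prop :=
  PlaneTree.dfLT (PlaneTree.parent a.1) (PlaneTree.parent b.1) ∨
    (PlaneTree.parent a.1 = PlaneTree.parent b.1 ∧
      PlaneTree.dfLT (PlaneTree.parent a.2) (PlaneTree.parent b.2))

/-- labeled elements of `T_s^(k)` as in the sampling algorithm: a labeled plane tree whose
labels are `{2, …, m̃ + 2k}`, in which the vertex labeled `j ≤ m̃` has `d̃_j − 1` children and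
the vertices labeled `> m̃` are leaves, together with a `≪`-increasing tuple of `k` admissible
pairs of leaves with distinct leaves, the `j`-th pair carrying labels `(m̃+2j−1, m̃+2j)`. -/
def IsLabeledElement (m k : ℕ) (d : ℕ → ℕ) (t : LTree)
    (x : Fin k → List ℕ × List ℕ) : Prop :=
  (LTree.dfsLab t).Perm (List.range' 2 (m - 1 + 2 * k)) ∧
  (∀ p ∈ PlaneTree.pos (LTree.shape t),
    PlaneTree.numChild (LTree.shape t) p =
      (if 2 ≤ LTree.labelAt t p ∧ LTree.labelAt t p ≤ m then d (LTree.labelAt t p) - 1 else 0)) ∧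
  (∀ j, PlaneTree.Admissible (LTree.shape t) (x j).1 (x j).2) ∧
  Function.Injective (PlaneTree.leafOf x) ∧
  (∀ j j' : Fin k, j < j' → pairLT (x j) (x j')) ∧
  (∀ j : Fin k, LTree.labelAt t (x j).1 = m + 2 * (j : ℕ) + 1 ∧
      LTree.labelAt t (x j).2 = m + 2 * (j : ℕ) + 2)

/-- the edge multiset of the graph `I(t, x)`: tree edges, with the leaves of the admissible
pairs deleted and an edge joining the two parents of each admissible pair added -/
noncomputable def Iedges (t : LTree) {k : ℕ} (x : Fin k → List ℕ × List ℕ) :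
    Multiset (Sym2 ℕ) :=
  (↑(((PlaneTree.pos (LTree.shape t)).filter fun p =>
        decide (p ≠ ([] : List ℕ) ∧ ∀ j, p ≠ (x j).1 ∧ p ≠ (x j).2)).map
      fun p => s(LTree.labelAt t (PlaneTree.parent p), LTree.labelAt t p)) : Multiset (Sym2 ℕ))
  + ↑(List.ofFn fun j =>
      s(LTree.labelAt t (PlaneTree.parent (x j).1), LTree.labelAt t (PlaneTree.parent (x j).2)))

/- Brownian excursion: Gaussian/Bessel kernels and finite-dimensional densities -/
noncomputable def gaussD (s x : ℝ) : ℝ := Real.exp (-(x ^ 2) / (2 * s)) / Real.sqrt (2 * Real.pi * s)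

noncomputable def killedK (s x y : ℝ) : ℝ := gaussD s (y - x) - gaussD s (y + x)

noncomputable def bes3K (s x y : ℝ) : ℝ := (y / x) * killedK s x y

noncomputable def exStart (t x : ℝ) : ℝ :=
  Real.sqrt (2 / Real.pi) * x ^ 2 * t ^ (-(3 : ℝ) / 2) * Real.exp (-(x ^ 2) / (2 * t))

noncomputable def exEnd (s x : ℝ) : ℝ := (2 / s) * gaussD s x

/-- finite-dimensional density of the standard Brownian excursion at times `t 0 < … < t n` -/
noncomputable def exFdd {n : ℕ} (t : Fin (n + 1) → ℝ) (x : Fin (n + 1) → ℝ) : ℝ :=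
  if ∀ i, 0 < x i then
    Real.sqrt (Real.pi / 2) * exStart (t 0) (x 0) *
      (∏ i : Fin n, bes3K (t i.succ - t i.castSucc) (x i.castSucc) (x i.succ)) *
      exEnd (1 - t (Fin.last n)) (x (Fin.last n))
  else 0

/-- `e` is a standard Brownian excursion on `[0,1]`: continuous nonnegative paths vanishing at
the endpoints, positive inside, with the excursion finite-dimensional densities. -/
def IsStdBrownianExcursion {Ω : Type*} [MeasureSpace Ω] (e : Ω → ℝ → ℝ) : Prop :=
  (∀ ω, Continuous (e ω)) ∧ (∀ ω, e ω 0 = 0) ∧ (∀ ω, e ω 1 = 0) ∧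
  (∀ ω, ∀ x ∈ Set.Ioo (0 : ℝ) 1, 0 < e ω x) ∧
  (∀ t : ℝ, Measurable fun ω => e ω t) ∧
  ∀ (n : ℕ) (t : Fin (n + 1) → ℝ), StrictMono t → 0 < t 0 → t (Fin.last n) < 1 →
    Measure.map (fun ω i => e ω (t i)) (volume : Measure Ω)
      = volume.withDensity fun x => ENNReal.ofReal (exFdd t x)

/-- `j`-th smallest value (0-based) among `ω 0, …, ω (m−1)` -/
noncomputable def orderStat {m : ℕ} (ω : Fin m → ℝ) (j : ℕ) : ℝ :=
  ((Multiset.map ω Finset.univ.val).sort (· ≤ ·)).getD j 0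

end Paper

/-!
The depth-first degree sequence `d₁, …, d_m` of a plane tree is a Łukasiewicz path: the partial
sums of `dᵢ - 1` stay nonnegative and first reach `-1` at the last step. By the cycle lemma, every
rotation of such a path attains its first minimum exactly at the point where the original path
starts, so the Vervaat transform sends the `m` cyclic rotations of the labeled depth-first sequence
of the tree, and only them, back to that sequence. Since the labels are distinct these rotations are `m`
distinct permutations, and `m = m! / (m - 1)!`.
-/

namespace List

theorem take_rotate_of_le_length_sub {α : Type*} (w : List α) {v j : ℕ} (hv : v ≤ w.length)
    (hj : j ≤ w.length - v) : (w.rotate v).take j = (w.drop v).take j := by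
  rw [rotate_eq_drop_append_take hv, take_append_of_le_length (by simpa)]

theorem take_rotate_of_length_sub_le {α : Type*} (w : List α) {v j : ℕ} (hv : v ≤ w.length)
    (hj : w.length - v ≤ j) (hjw : j ≤ w.length) :
    (w.rotate v).take j = w.drop v ++ w.take (j - (w.length - v)) := by
  rw [rotate_eq_drop_append_take hv, take_append, take_of_length_le (by simp; omega),
    length_drop, take_take, min_eq_left (by omega)]

end List

namespace Paper

/-- `k` is the number of trees of the encoded forest. -/
def IsLukasiewiczPath (k : ℕ) (w : List ℤ) : Prop :=
  w.sum = -k ∧ ∀ j < w.length, -(k : ℤ) < (w.take j).sum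

namespace IsLukasiewiczPath

theorem nil : IsLukasiewiczPath 0 [] := by
  simp [IsLukasiewiczPath]

theorem cons {k : ℕ} {w : List ℤ} (hw : IsLukasiewiczPath k w) :
    IsLukasiewiczPath 1 (((k : ℤ) - 1) :: w) := by
  refine ⟨by simp [hw.1]; ring, fun j hj => ?_⟩
  cases j with
  | zero => simp
  | succ j =>
    have := hw.2 j (by simpa using hj)
    simp only [List.take_succ_cons, List.sum_cons]
    omega

theorem append {k : ℕ} {u w : List ℤ} (hu : IsLukasiewiczPath 1 u) (hw : IsLukasiewiczPath k w) :
    IsLukasiewiczPath (k + 1) (u ++ w) := by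
  refine ⟨by simp [hu.1, hw.1], fun j hj => ?_⟩
  rw [List.take_append, List.sum_append]
  rcases lt_or_ge j u.length with hj' | hj'
  · have := hu.2 j hj'
    simp [Nat.sub_eq_zero_of_le hj'.le]
    omega
  · have := hw.2 (j - u.length) (by simp at hj; omega)
    rw [List.take_of_length_le hj', hu.1]
    push_cast
    omega

theorem ne_nil {k : ℕ} {w : List ℤ} (hw : IsLukasiewiczPath (k + 1) w) : w ≠ [] := by
  rintro rfl
  have := hw.1
  simp at this
  omega

end IsLukasiewiczPath

namespace LTree

mutual
theorem isLukasiewiczPath_dfsDeg (t : LTree) :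
    IsLukasiewiczPath 1 ((dfsDeg t).map fun d : ℕ => (d : ℤ) - 1) := by
  match t with
  | .node _ ts => simpa [dfsDeg] using (isLukasiewiczPath_dfsDegF ts).cons
theorem isLukasiewiczPath_dfsDegF (f : List LTree) :
    IsLukasiewiczPath f.length ((dfsDegF f).map fun d : ℕ => (d : ℤ) - 1) := by
  match f with
  | [] => exact .nil
  | t :: ts =>
    simpa [dfsDegF] using (isLukasiewiczPath_dfsDeg t).append (isLukasiewiczPath_dfsDegF ts)
end

end LTree

theorem firstMinIdx_eq (l : List ℤ) {r : ℕ} (hr : r ∈ Finset.Icc 1 l.length)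
    (hmin : ∀ j ∈ Finset.Icc 1 l.length, (l.take r).sum ≤ (l.take j).sum)
    (hfirst : ∀ j ∈ Finset.Icc 1 l.length, j < r → (l.take r).sum < (l.take j).sum) :
    firstMinIdx l = r := by
  rw [firstMinIdx, Finset.filter_congr_decidable]
  rw [show (Finset.filter _ _).min = (r : WithTop ℕ) from
    le_antisymm (Finset.min_le (Finset.mem_filter.mpr ⟨hr, hmin⟩))
      (Finset.le_min fun j hj => ?_)]
  · rfl
  obtain ⟨hj, hjmin⟩ := Finset.mem_filter.mp hj
  by_contra! hlt
  exact (hjmin r hr).not_gt (hfirst j hj (WithTop.coe_lt_coe.mp hlt))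

theorem firstMinIdx_rotate {w : List ℤ} (hw : IsLukasiewiczPath 1 w) {v : ℕ} (hv : v < w.length) :
    firstMinIdx (w.rotate v) = w.length - v := by
  -- with `s = (w.take v).sum ≥ 0`, the rotated path first reaches `-1 - s` at `w.length - v`
  -- (the end of `w`) and never goes below it afterwards, since `w` restarts from `0`
  obtain ⟨hsum, hnonneg⟩ := hw
  push_cast at hsum hnonneg
  have hsplit : ∀ j, (w.take (v + j)).sum = (w.take v).sum + ((w.drop v).take j).sum := fun j => by
    rw [List.take_add, List.sum_append]
  have hdrop : (w.drop v).sum = -1 - (w.take v).sum := by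
    linarith [List.sum_take_add_sum_drop w v]
  have hv0 := hnonneg v hv
  have htake : ((w.rotate v).take (w.length - v)).sum = (w.drop v).sum := by
    rw [List.take_rotate_of_le_length_sub w hv.le le_rfl, List.take_of_length_le (by simp)]
  have hlen : (w.rotate v).length = w.length := List.length_rotate ..
  apply firstMinIdx_eq <;> simp only [hlen, htake, Finset.mem_Icc]
  · omega
  · rintro j ⟨hj1, hjw⟩
    rcases le_or_gt j (w.length - v) with hj | hj
    · rw [List.take_rotate_of_le_length_sub w hv.le hj]
      rcases (show v + j ≤ w.length by omega).lt_or_eq with hvj | hvj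
      · have := hnonneg (v + j) hvj
        have := hsplit j
        omega
      · rw [List.take_of_length_le (by simp; omega)]
    · rw [List.take_rotate_of_length_sub_le w hv.le hj.le hjw, List.sum_append]
      have := hnonneg (j - (w.length - v)) (by omega)
      omega
  · rintro j ⟨hj1, -⟩ hj
    rw [List.take_rotate_of_le_length_sub w hv.le hj.le]
    have := hnonneg (v + j) (by omega)
    have := hsplit j
    omega

theorem exists_perm_ofFn_eq {m : ℕ} {l : List (Fin m)} (hnd : l.Nodup) (hlen : l.length = m) :
    ∃ π : Equiv.Perm (Fin m), List.ofFn π = l := by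
  have hinj : Function.Injective fun i : Fin m => l.get (Fin.cast hlen.symm i) :=
    fun i j h => Fin.cast_injective _ (List.nodup_iff_injective_get.mp hnd h)
  exact ⟨.ofBijective _ (Finite.injective_iff_bijective.mp hinj),
    List.ext_getElem (by simp [hlen]) fun i _ _ => by simp⟩

theorem ncard_setOf_ofFn_isRotated {m : ℕ} {l : List (Fin m)} (hnd : l.Nodup)
    (hlen : l.length = m) (hl : l ≠ []) :
    {π : Equiv.Perm (Fin m) | List.ofFn π ~r l}.ncard = m := by
  have hinj : Function.Injective fun π : Equiv.Perm (Fin m) => List.ofFn π :=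
    fun π σ h => Equiv.ext (congrFun (List.ofFn_injective h))
  have hrot : {l' | l' ~r l} = ((List.cyclicPermutations l).toFinset : Set (List (Fin m))) := by
    ext l'
    simp [List.mem_cyclicPermutations_iff]
  change ((fun π : Equiv.Perm (Fin m) => List.ofFn π) ⁻¹' {l' | l' ~r l}).ncard = m
  rw [Set.ncard_preimage_of_injective_subset_range hinj, hrot, Set.ncard_coe_finset,
    List.toFinset_card_of_nodup hnd.cyclicPermutations, List.length_cyclicPermutations_of_ne_nil l hl,
    hlen]
  intro l' hl'
  exact exists_perm_ofFn_eq (hl'.nodup_iff.mpr hnd) (hl'.perm.length_eq.trans hlen)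

theorem rotSeq_eq_iff {m : ℕ} {c : Fin m → ℕ} {L : List (Fin m)}
    (hL : IsLukasiewiczPath 1 (L.map fun i => (c i : ℤ) - 1)) (π : Equiv.Perm (Fin m)) :
    rotSeq c π = L ↔ List.ofFn π ~r L := by
  refine ⟨fun h => ⟨_, h⟩, fun h => ?_⟩
  obtain ⟨n, hn⟩ := h.symm
  have hpos : 0 < L.length := List.length_pos_iff.mpr (by simpa using hL.ne_nil)
  set v := n % L.length
  have hv : L.rotate v = List.ofFn π := (L.rotate_mod n).trans hn
  have hsteps : steps c π = (L.map fun i => (c i : ℤ) - 1).rotate v := by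
    rw [← List.map_rotate, hv, List.map_ofFn]
    rfl
  have hfirst : firstMinIdx (steps c π) = L.length - v := by
    rw [hsteps, firstMinIdx_rotate hL (by simpa using Nat.mod_lt n hpos), List.length_map]
  rw [rotSeq, hfirst, ← hv, List.rotate_rotate, Nat.add_sub_cancel' (Nat.mod_lt n hpos).le,
    List.rotate_length]

theorem exists_fin_list_of_perm_ofFn_val {m : ℕ} {l : List ℕ}
    (h : l.Perm (List.ofFn fun i : Fin m => (i : ℕ))) :
    ∃ L : List (Fin m), L.map Fin.val = l ∧ L.Nodup ∧ L.length = m := by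
  have hmem : ∀ a ∈ l, a < m := fun a ha => by
    obtain ⟨i, rfl⟩ := List.mem_ofFn.mp (h.subset ha)
    exact i.isLt
  have hnd : l.Nodup := h.nodup_iff.mpr (List.nodup_ofFn.mpr Fin.val_injective)
  have hmap : (l.pmap Fin.mk hmem).map Fin.val = l := by simp [List.map_pmap]
  refine ⟨l.pmap Fin.mk hmem, hmap, List.Nodup.of_map Fin.val (by rwa [hmap]), ?_⟩
  simpa using h.length_eq

end Paper

open Paper in
/-- the labeled plane tree whose Łukasiewicz walk is the Vervaat transform of
the uniformly permuted walk is uniform over labeled plane trees with children assignment `c`: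
each such tree arises with probability `1/(m−1)!`. -/
theorem vervaat_gives_uniform_labeled_tree (m : ℕ) (hm : 1 ≤ m) (c : Fin m → ℕ)
    (hc : (∑ i, c i) + 1 = m) (t : LTree)
    (hlab : (LTree.dfsLab t).Perm (List.ofFn fun i : Fin m => (i : ℕ)))
    (hdeg : LTree.dfsDeg t =
      (LTree.dfsLab t).map fun a => if h : a < m then c ⟨a, h⟩ else 0) :
    {π : Equiv.Perm (Fin m) |
        LTree.dfsLab t = (rotSeq c π).map (fun i => (i : ℕ)) ∧
          LTree.dfsDeg t = (rotSeq c π).map fun i => c i}.ncard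
      * Nat.factorial (m - 1) = Nat.factorial m := by
  -- `(rotSeq c π).map (fun i => (i : ℕ))` elaborates to `id` mapped over a monadic lift
  simp only [bind_pure_comp, List.map_eq_map, List.map_id']
  obtain ⟨L, hLval, hLnd, hLlen⟩ := exists_fin_list_of_perm_ofFn_val hlab
  have hdegL : LTree.dfsDeg t = L.map c := by
    rw [hdeg, ← hLval, List.map_map]
    exact List.map_congr_left fun i _ => by simp
  have hwalk : IsLukasiewiczPath 1 (L.map fun i => (c i : ℤ) - 1) := by
    have := t.isLukasiewiczPath_dfsDeg
    rwa [hdegL, List.map_map] at this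
  have hL : L ≠ [] := List.ne_nil_of_length_pos (by omega)
  have hset : {π : Equiv.Perm (Fin m) |
      LTree.dfsLab t = (rotSeq c π).map Fin.val ∧
        LTree.dfsDeg t = (rotSeq c π).map c} = {π : Equiv.Perm (Fin m) | List.ofFn π ~r L} := by
    ext π
    rw [Set.mem_ofPred_eq, Set.mem_ofPred_eq, ← rotSeq_eq_iff hwalk, ← hLval, hdegL]
    exact ⟨fun h => (List.map_injective_iff.mpr Fin.val_injective h.1).symm,
      fun h => by simp [h]⟩
  rw [hset, ncard_setOf_ofFn_isRotated hLnd hLlen hL]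
  exact Nat.mul_factorial_pred (by omega)
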